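/- arXiv:1809.00728 — 2 statements merged into one kernel-verified Lean document; each statement's English description precedes it below -/
import Mathlib

section
/- Let z, w ∈ ℂⁿ with 0 < ‖z‖ < ‖w‖/√n, and let λ ∈ ℂⁿ satisfy |λᵢ| = 1 and λᵢ·conj(zᵢ) = |zᵢ| for all i. Then |f_λ(z)| > |f_λ(w)|, where f_λ(x) = (Σᵢ λᵢ·conj(xᵢ))/‖x‖². -/
open scoped BigOperators ComplexConjugate

noncomputable def fLam {n : ℕ} (lam : Fin n → ℂ) (z : EuclideanSpace ℂ (Fin n)) : ℂ :=
  (∑ i, lam i * conj (z i)) / ((∑ i, ‖z i‖ ^ 2 : ℝ) : ℂ)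

/-!
The value `|f_λ(x)|` is squeezed between norms: the numerator is at most the ℓ¹-norm of `x`,
with equality when `λ` aligns the phases of `x`. Since `‖x‖₂ ≤ ‖x‖₁ ≤ √n ‖x‖₂`, this gives
`|f_λ(w)| ≤ √n / ‖w‖ < 1 / ‖z‖ ≤ |f_λ(z)|`.
-/

open Finset

namespace EuclideanSpace

variable {𝕜 ι : Type*} [RCLike 𝕜] [Fintype ι]

theorem norm_le_sum_norm (x : EuclideanSpace 𝕜 ι) : ‖x‖ ≤ ∑ i, ‖x i‖ := by
  refine (pow_le_pow_iff_left₀ (norm_nonneg x) (sum_nonneg fun i _ ↦ norm_nonneg _)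
    two_ne_zero).mp ?_
  rw [norm_sq_eq]
  exact sum_sq_le_sq_sum_of_nonneg fun i _ ↦ norm_nonneg _

theorem sum_norm_le_sqrt_card_mul_norm (x : EuclideanSpace 𝕜 ι) :
    ∑ i, ‖x i‖ ≤ √(Fintype.card ι) * ‖x‖ := by
  refine (pow_le_pow_iff_left₀ (sum_nonneg fun i _ ↦ norm_nonneg _) (by positivity)
    two_ne_zero).mp ?_
  rw [mul_pow, Real.sq_sqrt (Nat.cast_nonneg _), norm_sq_eq]
  exact sq_sum_le_card_mul_sum_sq

end EuclideanSpace

theorem fLam_eq {n : ℕ} (lam : Fin n → ℂ) (x : EuclideanSpace ℂ (Fin n)) :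
    fLam lam x = (∑ i, lam i * conj (x i)) / ((‖x‖ ^ 2 : ℝ) : ℂ) := by
  rw [fLam, EuclideanSpace.norm_sq_eq]

theorem norm_fLam_le {n : ℕ} (lam : Fin n → ℂ) (x : EuclideanSpace ℂ (Fin n))
    (hlam : ∀ i, ‖lam i‖ ≤ 1) : ‖fLam lam x‖ ≤ (∑ i, ‖x i‖) / ‖x‖ ^ 2 := by
  rw [fLam_eq, norm_div, Complex.norm_real, Real.norm_of_nonneg (by positivity)]
  gcongr
  calc ‖∑ i, lam i * conj (x i)‖ ≤ ∑ i, ‖lam i * conj (x i)‖ := norm_sum_le _ _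
    _ ≤ ∑ i, ‖x i‖ := by
      gcongr with i
      rw [norm_mul, RCLike.norm_conj]
      exact mul_le_of_le_one_left (norm_nonneg _) (hlam i)

theorem norm_fLam_of_phase_aligned {n : ℕ} (lam : Fin n → ℂ) (x : EuclideanSpace ℂ (Fin n))
    (hx : ∀ i, lam i * conj (x i) = (‖x i‖ : ℂ)) :
    ‖fLam lam x‖ = (∑ i, ‖x i‖) / ‖x‖ ^ 2 := by
  have hnum : ∑ i, lam i * conj (x i) = ((∑ i, ‖x i‖ : ℝ) : ℂ) := by
    push_cast
    exact sum_congr rfl fun i _ ↦ hx i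
  rw [fLam_eq, hnum, ← Complex.ofReal_div, Complex.norm_real, Real.norm_of_nonneg (by positivity)]

/-- If `0 < ‖z‖ < ‖w‖/√n` and `λ` is unimodular with `λᵢ conj(zᵢ) = |zᵢ|`, then
`|f_λ(z)| > |f_λ(w)|`. -/
theorem fLam_compare {n : ℕ} (z w : EuclideanSpace ℂ (Fin n)) (lam : Fin n → ℂ)
    (hz : 0 < ‖z‖) (hzw : ‖z‖ < ‖w‖ / Real.sqrt n)
    (hlam : ∀ i, ‖lam i‖ = 1) (hzlam : ∀ i, lam i * conj (z i) = (‖z i‖ : ℂ)) :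
    ‖fLam lam w‖ < ‖fLam lam z‖ := by
  have hn : 0 < √(n : ℝ) :=
    (Real.sqrt_nonneg _).lt_of_ne' fun h ↦ by simp [h] at hzw; linarith
  have hw : 0 < ‖w‖ := (div_pos_iff_of_pos_right hn).mp (hz.trans hzw)
  have hsum_w := EuclideanSpace.sum_norm_le_sqrt_card_mul_norm w
  rw [Fintype.card_fin] at hsum_w
  calc ‖fLam lam w‖ ≤ (∑ i, ‖w i‖) / ‖w‖ ^ 2 := norm_fLam_le lam w fun i ↦ (hlam i).le
    _ ≤ √n * ‖w‖ / ‖w‖ ^ 2 := by gcongr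
    _ = √n / ‖w‖ := by field_simp
    _ < 1 / ‖z‖ := by
      rw [div_lt_div_iff₀ hw hz, one_mul, mul_comm]
      exact (lt_div_iff₀ hn).mp hzw
    _ = ‖z‖ / ‖z‖ ^ 2 := by field_simp
    _ ≤ (∑ i, ‖z i‖) / ‖z‖ ^ 2 := by gcongr; exact EuclideanSpace.norm_le_sum_norm z
    _ = ‖fLam lam z‖ := (norm_fLam_of_phase_aligned lam z hzlam).symm
end

section
/- Let Ω ⊆ ℂⁿ be a bounded open set and 𝒪 a family of continuous functions on Ω containing the coordinate functions z ↦ zᵢ. Suppose for each p ∈ ∂Ω and each neighborhood V of p there exists f ∈ 𝒪, continuous on the closure of Ω, with f(p) = 1 and |f| < 1 on cl(Ω) \ V. Then for every compact K ⊆ Ω, the hull K̂ = {z ∈ Ω : |g(z)| ≤ max_K|g| for all g ∈ 𝒪} is compact. -/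
open scoped BigOperators

/-!
A point of the closure of the hull lying in `Ω` is in the hull, by continuity of the functions
of `O`. A boundary point `p` cannot lie in that closure: an almost peak function for `p` and the
neighbourhood `Kᶜ` has `max_K ‖f‖ < 1 = ‖f p‖`, so `‖f‖` exceeds `max_K ‖f‖` near `p`, which
keeps the hull away from `p`. Hence the hull is closed, and bounded since it lies in `Ω`.
-/

/-- The hull of `K` in `Ω` with respect to a family `O` of functions. -/
def hull {n : ℕ} (O : Set (EuclideanSpace ℂ (Fin n) → ℂ))
    (Ω K : Set (EuclideanSpace ℂ (Fin n))) : Set (EuclideanSpace ℂ (Fin n)) :=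
  {z ∈ Ω | ∀ f ∈ O, ‖f z‖ ≤ ⨆ x ∈ K, ‖f x‖}

theorem IsCompact.biSup_lt_of_forall_lt {X : Type*} [TopologicalSpace X] {K : Set X}
    (hK : IsCompact K) {g : X → ℝ} (hg : ContinuousOn g K) {c : ℝ} (hc : 0 < c)
    (hlt : ∀ x ∈ K, g x < c) : ⨆ x ∈ K, g x < c := by
  -- `0 ≤ m` is needed because the junk value of an empty `ℝ`-supremum is `0`.
  obtain ⟨m, hmc, hm0, hKm⟩ : ∃ m < c, 0 ≤ m ∧ ∀ x ∈ K, g x ≤ m := by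
    rcases K.eq_empty_or_nonempty with rfl | hne
    · exact ⟨0, hc, le_rfl, by simp⟩
    · obtain ⟨x₀, hx₀, hmax⟩ := hK.exists_isMaxOn hne hg
      exact ⟨max 0 (g x₀), max_lt hc (hlt x₀ hx₀), le_max_left _ _,
        fun x hx => (hmax hx).trans (le_max_right _ _)⟩
  exact (Real.iSup_le (fun x => Real.iSup_le (hKm x) hm0) hm0).trans_lt hmc

section Hull

variable {n : ℕ} {O : Set (EuclideanSpace ℂ (Fin n) → ℂ)} {Ω K : Set (EuclideanSpace ℂ (Fin n))}

theorem hull_subset (O : Set (EuclideanSpace ℂ (Fin n) → ℂ))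
    (Ω K : Set (EuclideanSpace ℂ (Fin n))) : hull O Ω K ⊆ Ω :=
  fun _ hz => hz.1

theorem closure_hull_inter_subset (hO : ∀ f ∈ O, ContinuousOn f Ω) :
    closure (hull O Ω K) ∩ Ω ⊆ hull O Ω K := by
  rintro z ⟨hz, hzΩ⟩
  refine ⟨hzΩ, fun f hf => ?_⟩
  have hcont : ContinuousWithinAt (fun w => ‖f w‖) (hull O Ω K) z :=
    ((hO f hf z hzΩ).mono (hull_subset O Ω K)).norm
  exact hcont.closure_le hz continuousWithinAt_const fun w hw => hw.2 f hf

theorem notMem_closure_hull_of_lt {f : EuclideanSpace ℂ (Fin n) → ℂ}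
    {p : EuclideanSpace ℂ (Fin n)}
    (hfO : f ∈ O) (hf : ContinuousWithinAt f Ω p) (hlt : ⨆ x ∈ K, ‖f x‖ < ‖f p‖) :
    p ∉ closure (hull O Ω K) := by
  intro hp
  have := mem_closure_iff_nhdsWithin_neBot.mp hp
  have hnear : ∀ᶠ w in nhdsWithin p (hull O Ω K), ⨆ x ∈ K, ‖f x‖ < ‖f w‖ :=
    (hf.mono (hull_subset O Ω K)).norm.eventually (eventually_gt_nhds hlt)
  obtain ⟨w, hw, hwH⟩ := (hnear.and self_mem_nhdsWithin).exists
  exact hw.not_ge (hwH.2 f hfO)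

end Hull

theorem hull_compact_of_peak_functions_general {n : ℕ}
    (Ω : Set (EuclideanSpace ℂ (Fin n))) (hΩbdd : Bornology.IsBounded Ω)
    (O : Set (EuclideanSpace ℂ (Fin n) → ℂ)) (hO : ∀ f ∈ O, ContinuousOn f Ω)
    (hpeak : ∀ p ∈ frontier Ω, ∀ V ∈ nhds p, ∃ f ∈ O, ContinuousOn f (closure Ω) ∧
      f p = 1 ∧ ∀ z ∈ closure Ω \ V, ‖f z‖ < 1) :
    ∀ K : Set (EuclideanSpace ℂ (Fin n)), IsCompact K → K ⊆ Ω →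
      IsCompact (hull O Ω K) := by
  intro K hK hKΩ
  refine Metric.isCompact_of_isClosed_isBounded ?_ (hΩbdd.subset (hull_subset O Ω K))
  refine closure_subset_iff_isClosed.mp fun z hz => ?_
  by_cases hzΩ : z ∈ Ω
  · exact closure_hull_inter_subset hO ⟨hz, hzΩ⟩
  have hzΩc : z ∈ closure Ω := closure_mono (hull_subset O Ω K) hz
  have hzK : Kᶜ ∈ nhds z := hK.isClosed.compl_mem_nhds fun hzK => hzΩ (hKΩ hzK)
  obtain ⟨f, hfO, hfc, hfz, hflt⟩ :=
    hpeak z ⟨hzΩc, fun h => hzΩ (interior_subset h)⟩ Kᶜ hzK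
  have hsup : ⨆ x ∈ K, ‖f x‖ < ‖f z‖ := by
    rw [hfz, norm_one]
    exact hK.biSup_lt_of_forall_lt (hfc.mono (hKΩ.trans subset_closure)).norm one_pos
      fun x hx => hflt x ⟨subset_closure (hKΩ hx), not_not_intro hx⟩
  exact absurd hz (notMem_closure_hull_of_lt hfO ((hfc z hzΩc).mono subset_closure) hsup)

/-- If `Ω` is bounded open, `O` contains the coordinate functions, and for each boundary point
`p` and each neighborhood `V` of `p` there is an almost-peak function in `O`, then the hull of
every compact `K ⊆ Ω` is compact. -/
theorem hull_compact_of_peak_functions {n : ℕ}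
    (Ω : Set (EuclideanSpace ℂ (Fin n))) (hΩ : IsOpen Ω) (hΩbdd : Bornology.IsBounded Ω)
    (O : Set (EuclideanSpace ℂ (Fin n) → ℂ)) (hO : ∀ f ∈ O, ContinuousOn f Ω)
    (hcoord : ∀ i : Fin n, (fun z : EuclideanSpace ℂ (Fin n) => z i) ∈ O)
    (hpeak : ∀ p ∈ frontier Ω, ∀ V ∈ nhds p, ∃ f ∈ O, ContinuousOn f (closure Ω) ∧
      f p = 1 ∧ ∀ z ∈ closure Ω \ V, ‖f z‖ < 1) :
    ∀ K : Set (EuclideanSpace ℂ (Fin n)), IsCompact K → K ⊆ Ω →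
      IsCompact (hull O Ω K) :=
  hull_compact_of_peak_functions_general Ω hΩbdd O hO hpeak
end
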